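/- arXiv:0903.1398 — 4 statements merged into one kernel-verified Lean document; each statement's English description precedes it below -/
import Mathlib

section
/- The functions f(t) = (t⁴ - b⁴)^{1/4}(t⁴ - c⁴)^{1/4}(t⁴ - a⁴)^{-1/4} (with cyclic relabelings for f₂, f₃) and f(t) = 2t³/((t⁴-a⁴)(t⁴-b⁴)(t⁴-c⁴))^{1/4} satisfy the system (f₁f₂)' = f f₃, (f₁f₃)' = f f₂, (f₂f₃)' = f f₁ on any interval where t⁴ > max(a⁴,b⁴,c⁴). -/
/-- `F a b c` is the BGPP function `((t⁴-b⁴)(t⁴-c⁴))^{1/4} / (t⁴-a⁴)^{1/4}`. -/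
noncomputable def F (a b c : ℝ) : ℝ → ℝ :=
  fun t => ((t ^ 4 - b ^ 4) * (t ^ 4 - c ^ 4)) ^ ((1 : ℝ) / 4) /
    (t ^ 4 - a ^ 4) ^ ((1 : ℝ) / 4)

/-- `Ff a b c` is the function `2t³ / ((t⁴-a⁴)(t⁴-b⁴)(t⁴-c⁴))^{1/4}`. -/
noncomputable def Ff (a b c : ℝ) : ℝ → ℝ :=
  fun t => 2 * t ^ 3 /
    ((t ^ 4 - a ^ 4) * ((t ^ 4 - b ^ 4) * (t ^ 4 - c ^ 4))) ^ ((1 : ℝ) / 4)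

/-
On `t⁴ > max(a⁴, b⁴, c⁴)` all fourth roots are of positive numbers, and the quarter powers
combine: `f₁ f₂ = √(t⁴ - c⁴)`, while `f f₃ = 2t³ / √(t⁴ - c⁴)`, which is exactly the derivative
of `√(t⁴ - c⁴)`. The other two equations are the same one after permuting `a, b, c`, under which
`f` is invariant and each `fᵢ` only depends on which parameter sits in the denominator.
-/

open Filter Topology

lemma F_comm (a b c : ℝ) : F a b c = F a c b := by
  funext t
  simp only [F, mul_comm]

lemma Ff_swap_right (a b c : ℝ) : Ff a b c = Ff a c b := by
  funext t
  simp only [Ff, mul_comm (t ^ 4 - b ^ 4)]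

lemma Ff_swap_left (a b c : ℝ) : Ff a b c = Ff b a c := by
  funext t
  simp only [Ff, mul_left_comm (t ^ 4 - a ^ 4)]

section QuarterPowers

variable {x y z : ℝ}

lemma rpow_quarter_mul_self (hz : 0 ≤ z) : z ^ ((1 : ℝ) / 4) * z ^ ((1 : ℝ) / 4) = √z := by
  rw [← Real.rpow_add' hz (by norm_num), Real.sqrt_eq_rpow]
  norm_num

lemma quarter_ratio_mul_quarter_ratio (hx : 0 < x) (hy : 0 < y) (hz : 0 ≤ z) :
    (y * z) ^ ((1 : ℝ) / 4) / x ^ ((1 : ℝ) / 4) * ((x * z) ^ ((1 : ℝ) / 4) / y ^ ((1 : ℝ) / 4))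
      = √z := by
  have hx' : x ^ ((1 : ℝ) / 4) ≠ 0 := (Real.rpow_pos_of_pos hx _).ne'
  have hy' : y ^ ((1 : ℝ) / 4) ≠ 0 := (Real.rpow_pos_of_pos hy _).ne'
  rw [Real.mul_rpow hy.le hz, Real.mul_rpow hx.le hz, ← rpow_quarter_mul_self hz]
  field_simp

lemma div_quarter_mul_quarter_ratio (w : ℝ) (hx : 0 < x) (hy : 0 < y) (hz : 0 < z) :
    w / (x * (y * z)) ^ ((1 : ℝ) / 4) * ((x * y) ^ ((1 : ℝ) / 4) / z ^ ((1 : ℝ) / 4))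
      = w / √z := by
  have hxy : (x * y) ^ ((1 : ℝ) / 4) ≠ 0 := (Real.rpow_pos_of_pos (mul_pos hx hy) _).ne'
  have hz' : z ^ ((1 : ℝ) / 4) ≠ 0 := (Real.rpow_pos_of_pos hz _).ne'
  rw [← mul_assoc, Real.mul_rpow (mul_pos hx hy).le hz.le, ← rpow_quarter_mul_self hz.le]
  field_simp

end QuarterPowers

lemma eventually_pow_four_gt {a t : ℝ} (h : a ^ 4 < t ^ 4) : ∀ᶠ s in 𝓝 t, a ^ 4 < s ^ 4 :=
  ((continuous_pow 4).tendsto t).eventually_const_lt h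

lemma hasDerivAt_F_mul_F {a b c t : ℝ}
    (ha : a ^ 4 < t ^ 4) (hb : b ^ 4 < t ^ 4) (hc : c ^ 4 < t ^ 4) :
    HasDerivAt (fun s => F a b c s * F b a c s) (Ff a b c t * F c a b t) t := by
  have hC : 0 < t ^ 4 - c ^ 4 := sub_pos.2 hc
  have hsqrt : HasDerivAt (fun s => √(s ^ 4 - c ^ 4)) (4 * t ^ 3 / (2 * √(t ^ 4 - c ^ 4))) t := by
    have hpow : HasDerivAt (fun s : ℝ => s ^ 4 - c ^ 4) (4 * t ^ 3) t := by
      simpa using (hasDerivAt_pow 4 t).sub_const (c ^ 4)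
    exact hpow.sqrt hC.ne'
  have hprod : (fun s => F a b c s * F b a c s) =ᶠ[𝓝 t] fun s => √(s ^ 4 - c ^ 4) := by
    filter_upwards [eventually_pow_four_gt ha, eventually_pow_four_gt hb,
      eventually_pow_four_gt hc] with s hsa hsb hsc
    exact quarter_ratio_mul_quarter_ratio (sub_pos.2 hsa) (sub_pos.2 hsb) (sub_pos.2 hsc).le
  have hval : Ff a b c t * F c a b t = 4 * t ^ 3 / (2 * √(t ^ 4 - c ^ 4)) := by
    rw [Ff, F, div_quarter_mul_quarter_ratio _ (sub_pos.2 ha) (sub_pos.2 hb) hC]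
    ring
  rw [hval]
  exact hsqrt.congr_of_eventuallyEq hprod

/-- The triaxial Bianchi IX BGPP functions satisfy the evolution system
`(f₁f₂)' = f f₃`, `(f₁f₃)' = f f₂`, `(f₂f₃)' = f f₁` where `t⁴ > max(a⁴,b⁴,c⁴)`. -/
theorem stmt_2 (a b c t : ℝ)
    (ha : a ^ 4 < t ^ 4) (hb : b ^ 4 < t ^ 4) (hc : c ^ 4 < t ^ 4) :
    HasDerivAt (fun s => F a b c s * F b a c s) (Ff a b c t * F c a b t) t ∧
    HasDerivAt (fun s => F a b c s * F c a b s) (Ff a b c t * F b a c t) t ∧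
    HasDerivAt (fun s => F b a c s * F c a b s) (Ff a b c t * F a b c t) t := by
  refine ⟨hasDerivAt_F_mul_F ha hb hc, ?_, ?_⟩
  · have h := hasDerivAt_F_mul_F ha hc hb
    rwa [← F_comm, ← Ff_swap_right] at h
  · have h := hasDerivAt_F_mul_F hb hc ha
    rwa [← F_comm b, F_comm c, Ff_swap_right, ← Ff_swap_left] at h
end

section
/- The substitution x_i = (f_j f_k)² transforms the system (f₁f₂)' = f f₃, (f₁f₃)' = f f₂, (f₂f₃)' = f f₁ into dx_i/dr = 2(x₁x₂x₃)^{1/4} for each i, where dr = f dt; in particular, the differences x_i - x_j are constant along solutions. -/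
/-!
Since `x₁x₂x₃ = (f₁f₂f₃)⁴`, its fourth root is `f₁f₂f₃`, and the chain rule gives
`x₁' = 2 (f₂f₃) (f₂f₃)' = 2 f f₁f₂f₃`, and likewise for `x₂`, `x₃`. All three derivatives
agree, so the differences have zero derivative and are constant.
-/

theorem rpow_one_div_four_sq_mul_sq_mul_sq {a b c : ℝ} (ha : 0 ≤ a) (hb : 0 ≤ b) (hc : 0 ≤ c) :
    ((b * c) ^ 2 * (a * c) ^ 2 * (a * b) ^ 2) ^ ((1 : ℝ) / 4) = a * b * c := by
  rw [show (b * c) ^ 2 * (a * c) ^ 2 * (a * b) ^ 2 = (a * b * c) ^ 4 by ring, one_div]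
  exact_mod_cast Real.pow_rpow_inv_natCast (by positivity) four_ne_zero

theorem sub_eq_sub_of_hasDerivAt_eq {𝕜 G : Type*} [RCLike 𝕜] [NormedAddCommGroup G]
    [NormedSpace 𝕜 G] {g h g' : 𝕜 → G} (hg : ∀ t, HasDerivAt g (g' t) t)
    (hh : ∀ t, HasDerivAt h (g' t) t) (t s : 𝕜) : g t - h t = g s - h s := by
  have hd : ∀ u, HasDerivAt (fun x => g x - h x) 0 u := fun u => by
    simpa using (hg u).fun_sub (hh u)
  exact is_const_of_deriv_eq_zero (fun u => (hd u).differentiableAt) (fun u => (hd u).deriv) t s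

theorem stmt_4_general (f f₁ f₂ f₃ : ℝ → ℝ)
    (h1 : ∀ t, 0 < f₁ t) (h2 : ∀ t, 0 < f₂ t) (h3 : ∀ t, 0 < f₃ t)
    (e1 : ∀ t, HasDerivAt (fun s => f₁ s * f₂ s) (f t * f₃ t) t)
    (e2 : ∀ t, HasDerivAt (fun s => f₁ s * f₃ s) (f t * f₂ t) t)
    (e3 : ∀ t, HasDerivAt (fun s => f₂ s * f₃ s) (f t * f₁ t) t) :
    (∀ t, HasDerivAt (fun s => (f₂ s * f₃ s) ^ 2)
      (2 * f t * ((f₂ t * f₃ t) ^ 2 * (f₁ t * f₃ t) ^ 2 * (f₁ t * f₂ t) ^ 2) ^ ((1:ℝ)/4)) t) ∧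
    (∀ t, HasDerivAt (fun s => (f₁ s * f₃ s) ^ 2)
      (2 * f t * ((f₂ t * f₃ t) ^ 2 * (f₁ t * f₃ t) ^ 2 * (f₁ t * f₂ t) ^ 2) ^ ((1:ℝ)/4)) t) ∧
    (∀ t, HasDerivAt (fun s => (f₁ s * f₂ s) ^ 2)
      (2 * f t * ((f₂ t * f₃ t) ^ 2 * (f₁ t * f₃ t) ^ 2 * (f₁ t * f₂ t) ^ 2) ^ ((1:ℝ)/4)) t) ∧
    (∀ t s, (f₂ t * f₃ t) ^ 2 - (f₁ t * f₃ t) ^ 2 =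
      (f₂ s * f₃ s) ^ 2 - (f₁ s * f₃ s) ^ 2) ∧
    (∀ t s, (f₁ t * f₃ t) ^ 2 - (f₁ t * f₂ t) ^ 2 =
      (f₁ s * f₃ s) ^ 2 - (f₁ s * f₂ s) ^ 2) := by
  have hsq : ∀ {u w : ℝ → ℝ}, (∀ t, HasDerivAt u (f t * w t) t) →
      (∀ t, u t * w t = f₁ t * f₂ t * f₃ t) → ∀ t, HasDerivAt (fun s => u s ^ 2)
        (2 * f t * ((f₂ t * f₃ t) ^ 2 * (f₁ t * f₃ t) ^ 2 * (f₁ t * f₂ t) ^ 2) ^ ((1:ℝ)/4)) t := by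
    intro u w hu huw t
    rw [rpow_one_div_four_sq_mul_sq_mul_sq (h1 t).le (h2 t).le (h3 t).le, ← huw t]
    exact ((hu t).fun_pow 2).congr_deriv (by norm_num; ring)
  have d₁ := hsq e3 fun t => by ring
  have d₂ := hsq e2 fun t => by ring
  have d₃ := hsq e1 fun t => by ring
  exact ⟨d₁, d₂, d₃, sub_eq_sub_of_hasDerivAt_eq d₁ d₂, sub_eq_sub_of_hasDerivAt_eq d₂ d₃⟩

/-- The substitution `xᵢ = (fⱼfₖ)²` transforms the system `(f₁f₂)' = f f₃`, etc.,
into `xᵢ' = 2 f (x₁x₂x₃)^{1/4}` for each `i`, and the differences `xᵢ - xⱼ` are constant. -/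
theorem stmt_4 (f f₁ f₂ f₃ : ℝ → ℝ)
    (hf : ∀ t, 0 < f t) (h1 : ∀ t, 0 < f₁ t) (h2 : ∀ t, 0 < f₂ t) (h3 : ∀ t, 0 < f₃ t)
    (e1 : ∀ t, HasDerivAt (fun s => f₁ s * f₂ s) (f t * f₃ t) t)
    (e2 : ∀ t, HasDerivAt (fun s => f₁ s * f₃ s) (f t * f₂ t) t)
    (e3 : ∀ t, HasDerivAt (fun s => f₂ s * f₃ s) (f t * f₁ t) t) :
    (∀ t, HasDerivAt (fun s => (f₂ s * f₃ s) ^ 2)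
      (2 * f t * ((f₂ t * f₃ t) ^ 2 * (f₁ t * f₃ t) ^ 2 * (f₁ t * f₂ t) ^ 2) ^ ((1:ℝ)/4)) t) ∧
    (∀ t, HasDerivAt (fun s => (f₁ s * f₃ s) ^ 2)
      (2 * f t * ((f₂ t * f₃ t) ^ 2 * (f₁ t * f₃ t) ^ 2 * (f₁ t * f₂ t) ^ 2) ^ ((1:ℝ)/4)) t) ∧
    (∀ t, HasDerivAt (fun s => (f₁ s * f₂ s) ^ 2)
      (2 * f t * ((f₂ t * f₃ t) ^ 2 * (f₁ t * f₃ t) ^ 2 * (f₁ t * f₂ t) ^ 2) ^ ((1:ℝ)/4)) t) ∧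
    (∀ t s, (f₂ t * f₃ t) ^ 2 - (f₁ t * f₃ t) ^ 2 =
      (f₂ s * f₃ s) ^ 2 - (f₁ s * f₃ s) ^ 2) ∧
    (∀ t s, (f₁ t * f₃ t) ^ 2 - (f₁ t * f₂ t) ^ 2 =
      (f₁ s * f₃ s) ^ 2 - (f₁ s * f₂ s) ^ 2) :=
  stmt_4_general f f₁ f₂ f₃ h1 h2 h3 e1 e2 e3
end

section
/- The function v(t) = f(t)^{4/3}, where f satisfies 3ff'' + (f')² - 18τf = 0, satisfies (v')² = (64/5)(τ v^{5/4} - a) for some constant a; equivalently, (f')²/36 = (τ f^{5/3} - a)/(5 f^{2/3}). -/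
/-- First integral of the Spin(7) evolution ODE `3 f f'' + (f')² - 18τ f = 0`:
there is a constant `a` with `(f')² = 36(τ f^{5/3} - a)/(5 f^{2/3})`. -/
theorem stmt_10 (f : ℝ → ℝ) (τ p q : ℝ) (hf : ContDiff ℝ (⊤ : ℕ∞) f)
    (hpos : ∀ t ∈ Set.Ioo p q, 0 < f t)
    (hode : ∀ t ∈ Set.Ioo p q,
      3 * f t * deriv (deriv f) t + (deriv f t) ^ 2 - 18 * τ * f t = 0) :
    ∃ a : ℝ, ∀ t ∈ Set.Ioo p q,
      (deriv f t) ^ 2 = 36 * (τ * (f t) ^ ((5:ℝ)/3) - a) / (5 * (f t) ^ ((2:ℝ)/3)) := by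
  rcases Set.eq_empty_or_nonempty (Set.Ioo p q) with hemp | ⟨t₀, ht₀⟩
  · exact ⟨0, fun t ht => absurd (hemp ▸ ht) (Set.notMem_empty t)⟩
  obtain ⟨hfd, hfd'⟩ := contDiff_infty_iff_deriv.mp (hf.of_le (by simp))
  have hfd'' : Differentiable ℝ (deriv f) := hfd'.differentiable (by simp)
  set g : ℝ → ℝ := fun t => τ * (f t) ^ ((5:ℝ)/3) - 5/36 * (deriv f t)^2 * (f t) ^ ((2:ℝ)/3)
    with hg
  -- g has derivative 0 on the interval
  have key : ∀ t ∈ Set.Ioo p q, HasDerivAt g 0 t := by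
    intro t ht
    have hF : 0 < f t := hpos t ht
    have hFne : f t ≠ 0 := ne_of_gt hF
    have h1 : HasDerivAt (fun s => (f s) ^ ((5:ℝ)/3))
        (deriv f t * ((5:ℝ)/3) * (f t) ^ ((5:ℝ)/3 - 1)) t :=
      (hfd t).hasDerivAt.rpow_const (Or.inl hFne)
    have h2 : HasDerivAt (fun s => (f s) ^ ((2:ℝ)/3))
        (deriv f t * ((2:ℝ)/3) * (f t) ^ ((2:ℝ)/3 - 1)) t :=
      (hfd t).hasDerivAt.rpow_const (Or.inl hFne)
    have h3 : HasDerivAt (fun s => (deriv f s)^2)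
        (2 * deriv f t * deriv (deriv f) t) t := by
      have := ((hfd'' t).hasDerivAt.fun_pow 2)
      simpa [mul_comm, mul_assoc, mul_left_comm] using this
    have hG : HasDerivAt g
        (τ * (deriv f t * ((5:ℝ)/3) * (f t) ^ ((5:ℝ)/3 - 1)) -
          (5/36 * (2 * deriv f t * deriv (deriv f) t) * (f t) ^ ((2:ℝ)/3) +
           5/36 * (deriv f t)^2 * (deriv f t * ((2:ℝ)/3) * (f t) ^ ((2:ℝ)/3 - 1)))) t := by
      have := ((h1.const_mul τ).fun_sub (((h3.const_mul (5/36 : ℝ)).fun_mul h2)))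
      simpa [hg, mul_comm, mul_assoc, mul_left_comm, add_comm] using this
    convert hG using 1
    have hode' : deriv (deriv f) t = (18 * τ * f t - (deriv f t)^2) / (3 * f t) := by
      have := hode t ht
      field_simp
      linarith
    rw [hode']
    have e1 : (f t) ^ ((5:ℝ)/3 - 1) = (f t) ^ ((2:ℝ)/3) := by norm_num
    have e2 : (f t) ^ ((2:ℝ)/3 - 1) = (f t) ^ ((2:ℝ)/3) / f t := by
      rw [Real.rpow_sub hF, Real.rpow_one]
    rw [e1, e2]
    field_simp
    ring
  -- hence g is constant
  refine ⟨g t₀, fun t ht => ?_⟩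
  have hconst : g t = g t₀ := by
    apply (convex_Ioo p q).is_const_of_fderivWithin_eq_zero
      (fun s hs => ((key s hs).differentiableAt).differentiableWithinAt)
      (fun s hs => ?_) ht ht₀
    rw [fderivWithin_of_isOpen isOpen_Ioo hs, (key s hs).hasFDerivAt.fderiv]
    ext
    simp
  have hF : 0 < f t := hpos t ht
  have hFne : (f t) ^ ((2:ℝ)/3) ≠ 0 := ne_of_gt (Real.rpow_pos_of_pos hF _)
  have hsplit : (f t) ^ ((5:ℝ)/3) = (f t) ^ ((2:ℝ)/3) * f t := by
    rw [show (5:ℝ)/3 = 2/3 + 1 by norm_num, Real.rpow_add hF, Real.rpow_one]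
  rw [← hconst]
  field_simp [hg]
  ring
end

section
/- In the three-constant family solving the τ = 0 closed-4-form system (3f' = 2(f₁+f₂+f₃), (ff_jf_k)' = 6f₁f₂f₃ for each cyclic (i,j,k) with appropriate signs), given by f⁹ = C⁹(u+a₁)(u+a₂)(u+a₃) and f_i = √(6/C)·((u+a_j)⁴(u+a_k)⁴/(u+a_i)⁵)^{1/9}, the differential ideal condition f(f_if_j)' - f'f_if_j + 2f₁f₂f₃ - 2f_if_j(f_i+f_j) = 0 holds for all cyclic (i,j,k) if and only if a₁ = a₂ = a₃. -/
/-- `qkF C a₁ a₂ a₃ u = C((u+a₁)(u+a₂)(u+a₃))^{1/9}`. -/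
noncomputable def qkF (C a₁ a₂ a₃ : ℝ) : ℝ → ℝ :=
  fun u => C * ((u + a₁) * (u + a₂) * (u + a₃)) ^ ((1 : ℝ)/9)

/-- `qkFi C ai aj ak u = √(6/C)·((u+aj)⁴(u+ak)⁴/(u+ai)⁵)^{1/9}`. -/
noncomputable def qkFi (C ai aj ak : ℝ) : ℝ → ℝ :=
  fun u => Real.sqrt (6 / C) *
    (((u + aj) ^ 4 * (u + ak) ^ 4) / (u + ai) ^ 5) ^ ((1 : ℝ)/9)

/-- The derivative `'` in the time variable `t`, where `du = f₁f₂f₃ dt`,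
expressed in the variable `u`. -/
noncomputable def qkD (C a₁ a₂ a₃ : ℝ) (G : ℝ → ℝ) : ℝ → ℝ :=
  fun u => qkFi C a₁ a₂ a₃ u * qkFi C a₂ a₃ a₁ u * qkFi C a₃ a₁ a₂ u * deriv G u

/-!
With `xᵢ = u + aᵢ` one has `fᵢ = √(6/C) (f/C)⁴ / xᵢ`, so `xᵢ fᵢ` does not depend on `i`.
The logarithmic derivatives of `f` and of the `fᵢ` are combinations of the `1/xᵢ`, and
together with `C √(6/C)² = 6` the ideal condition for `(i,j,k)` collapses to
`(10/3) fᵢ fⱼ (2fₖ - fᵢ - fⱼ) = 0`. Since the `fᵢ` are positive, this says `2fₖ = fᵢ + fⱼ`,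
which forces `f₁ = f₂ = f₃` and hence `x₁ = x₂ = x₃`.
-/

variable {C a₁ a₂ a₃ u : ℝ}

lemma hasDerivAt_qkF (h₁ : u + a₁ ≠ 0) (h₂ : u + a₂ ≠ 0) (h₃ : u + a₃ ≠ 0) :
    HasDerivAt (qkF C a₁ a₂ a₃)
      (qkF C a₁ a₂ a₃ u * (1 / (u + a₁) + 1 / (u + a₂) + 1 / (u + a₃)) / 9) u := by
  have hX : (u + a₁) * (u + a₂) * (u + a₃) ≠ 0 := by simp [*]
  have hlin (a : ℝ) : HasDerivAt (fun v => v + a) 1 u := (hasDerivAt_id u).add_const a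
  refine (((((hlin a₁).mul (hlin a₂)).mul (hlin a₃)).rpow_const
    (p := (1 : ℝ) / 9) (Or.inl hX)).const_mul C).congr_deriv ?_
  simp only [qkF, Pi.mul_apply]
  rw [Real.rpow_sub_one hX]
  field_simp

lemma hasDerivAt_qkFi (h₁ : u + a₁ ≠ 0) (h₂ : u + a₂ ≠ 0) (h₃ : u + a₃ ≠ 0) :
    HasDerivAt (qkFi C a₁ a₂ a₃)
      (qkFi C a₁ a₂ a₃ u * (4 / (u + a₂) + 4 / (u + a₃) - 5 / (u + a₁)) / 9) u := by
  have hX : (u + a₂) ^ 4 * (u + a₃) ^ 4 / (u + a₁) ^ 5 ≠ 0 := by simp [*]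
  have hlin (a : ℝ) : HasDerivAt (fun v => v + a) 1 u := (hasDerivAt_id u).add_const a
  refine ((((hlin a₂).pow 4).mul ((hlin a₃).pow 4)).div ((hlin a₁).pow 5)
    (pow_ne_zero 5 h₁) |>.rpow_const (p := (1 : ℝ) / 9) (Or.inl hX)).const_mul
    √(6 / C) |>.congr_deriv ?_
  simp only [qkFi, Pi.mul_apply, Pi.div_apply, Pi.pow_apply]
  rw [Real.rpow_sub_one hX]
  field_simp
  ring

lemma qkFi_eq (h₁ : 0 < u + a₁) (h₂ : 0 < u + a₂) (h₃ : 0 < u + a₃) :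
    qkFi C a₁ a₂ a₃ u =
      √(6 / C) * (((u + a₁) * (u + a₂) * (u + a₃)) ^ ((1 : ℝ) / 9)) ^ 4 / (u + a₁) := by
  have hX : (u + a₂) ^ 4 * (u + a₃) ^ 4 / (u + a₁) ^ 5
      = ((u + a₁) * (u + a₂) * (u + a₃)) ^ 4 / (u + a₁) ^ 9 := by
    field_simp
  have hroot : ((u + a₁) ^ 9) ^ ((1 : ℝ) / 9) = u + a₁ := by
    rw [show (1 : ℝ) / 9 = ((9 : ℕ) : ℝ)⁻¹ by norm_num]
    exact Real.pow_rpow_inv_natCast h₁.le (by norm_num)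
  rw [qkFi, hX, Real.div_rpow (by positivity) (by positivity), hroot,
    ← Real.rpow_pow_comm (by positivity), mul_div_assoc]

lemma qkF_rotate (C a₁ a₂ a₃ : ℝ) : qkF C a₂ a₃ a₁ = qkF C a₁ a₂ a₃ := by
  funext u
  rw [qkF, qkF, show (u + a₂) * (u + a₃) * (u + a₁) = (u + a₁) * (u + a₂) * (u + a₃) by ring]

lemma qkD_rotate (C a₁ a₂ a₃ : ℝ) : qkD C a₂ a₃ a₁ = qkD C a₁ a₂ a₃ := by
  funext G u
  simp only [qkD]
  ring

lemma qk_ideal_eq (hC : 0 < C) (h₁ : 0 < u + a₁) (h₂ : 0 < u + a₂) (h₃ : 0 < u + a₃) :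
    qkF C a₁ a₂ a₃ u * qkD C a₁ a₂ a₃ (fun v => qkFi C a₁ a₂ a₃ v * qkFi C a₂ a₃ a₁ v) u
        - qkD C a₁ a₂ a₃ (qkF C a₁ a₂ a₃) u * (qkFi C a₁ a₂ a₃ u * qkFi C a₂ a₃ a₁ u)
        + 2 * (qkFi C a₁ a₂ a₃ u * qkFi C a₂ a₃ a₁ u * qkFi C a₃ a₁ a₂ u)
        - 2 * (qkFi C a₁ a₂ a₃ u) ^ 2 * qkFi C a₂ a₃ a₁ u
        - 2 * qkFi C a₁ a₂ a₃ u * (qkFi C a₂ a₃ a₁ u) ^ 2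
      = 10 / 3 * qkFi C a₁ a₂ a₃ u * qkFi C a₂ a₃ a₁ u
          * (2 * qkFi C a₃ a₁ a₂ u - qkFi C a₁ a₂ a₃ u - qkFi C a₂ a₃ a₁ u) := by
  have d₁ := hasDerivAt_qkFi (C := C) h₁.ne' h₂.ne' h₃.ne'
  have d₂ := hasDerivAt_qkFi (C := C) h₂.ne' h₃.ne' h₁.ne'
  simp only [qkD]
  rw [HasDerivAt.deriv (f := fun v => qkFi C a₁ a₂ a₃ v * qkFi C a₂ a₃ a₁ v) (d₁.mul d₂),
    (hasDerivAt_qkF h₁.ne' h₂.ne' h₃.ne').deriv,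
    qkFi_eq h₁ h₂ h₃, qkFi_eq h₂ h₃ h₁, qkFi_eq h₃ h₁ h₂,
    show (u + a₂) * (u + a₃) * (u + a₁) = (u + a₁) * (u + a₂) * (u + a₃) by ring,
    show (u + a₃) * (u + a₁) * (u + a₂) = (u + a₁) * (u + a₂) * (u + a₃) by ring]
  simp only [qkF]
  have hs : √(6 / C) ^ 2 = 6 / C := Real.sq_sqrt (by positivity)
  have hs₀ : √(6 / C) ≠ 0 := by positivity
  have hQ : (((u + a₁) * (u + a₂) * (u + a₃)) ^ ((1 : ℝ) / 9)) ^ 9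
      = (u + a₁) * (u + a₂) * (u + a₃) := by
    rw [← Real.rpow_natCast, ← Real.rpow_mul (by positivity)]
    norm_num
  have hQ₀ : ((u + a₁) * (u + a₂) * (u + a₃)) ^ ((1 : ℝ) / 9) ≠ 0 := by positivity
  generalize √(6 / C) = s at hs hs₀
  generalize ((u + a₁) * (u + a₂) * (u + a₃)) ^ ((1 : ℝ) / 9) = Q at hQ hQ₀
  generalize u + a₁ = x₁ at h₁ hQ ⊢
  generalize u + a₂ = x₂ at h₂ hQ ⊢
  generalize u + a₃ = x₃ at h₃ hQ ⊢
  obtain rfl : C = 6 / s ^ 2 := by field_simp at hs ⊢; linarith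
  obtain rfl : x₃ = Q ^ 9 / (x₁ * x₂) := by field_simp; linarith
  field_simp
  ring

lemma qkFi_pos (hC : 0 < C) (h₁ : 0 < u + a₁) (h₂ : 0 < u + a₂) (h₃ : 0 < u + a₃) :
    0 < qkFi C a₁ a₂ a₃ u := by
  rw [qkFi]
  positivity

lemma qkFi_mul_rotate (h₁ : 0 < u + a₁) (h₂ : 0 < u + a₂) (h₃ : 0 < u + a₃) :
    (u + a₂) * qkFi C a₂ a₃ a₁ u = (u + a₁) * qkFi C a₁ a₂ a₃ u := by
  rw [qkFi_eq h₁ h₂ h₃, qkFi_eq h₂ h₃ h₁,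
    show (u + a₂) * (u + a₃) * (u + a₁) = (u + a₁) * (u + a₂) * (u + a₃) by ring]
  field_simp

lemma eq_of_qkFi_rotate_eq (hC : 0 < C) (h₁ : 0 < u + a₁) (h₂ : 0 < u + a₂)
    (h₃ : 0 < u + a₃) (h : qkFi C a₂ a₃ a₁ u = qkFi C a₁ a₂ a₃ u) : a₂ = a₁ := by
  have hmul := qkFi_mul_rotate (C := C) h₁ h₂ h₃
  rw [h] at hmul
  linarith [mul_right_cancel₀ (qkFi_pos hC h₁ h₂ h₃).ne' hmul]

/-- In the three-constant family solving the τ = 0 closed-4-form system, the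
differential ideal condition `f(fᵢfⱼ)' - f'fᵢfⱼ + 2f₁f₂f₃ - 2fᵢfⱼ(fᵢ+fⱼ) = 0`
holds for all cyclic `(i,j,k)` iff `a₁ = a₂ = a₃`. -/
theorem stmt_12 (C a₁ a₂ a₃ : ℝ) (hC : 0 < C) :
    (∀ u : ℝ, -a₁ < u → -a₂ < u → -a₃ < u →
      (qkF C a₁ a₂ a₃ u *
          qkD C a₁ a₂ a₃ (fun v => qkFi C a₁ a₂ a₃ v * qkFi C a₂ a₃ a₁ v) u
        - qkD C a₁ a₂ a₃ (qkF C a₁ a₂ a₃) u * (qkFi C a₁ a₂ a₃ u * qkFi C a₂ a₃ a₁ u)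
        + 2 * (qkFi C a₁ a₂ a₃ u * qkFi C a₂ a₃ a₁ u * qkFi C a₃ a₁ a₂ u)
        - 2 * (qkFi C a₁ a₂ a₃ u) ^ 2 * qkFi C a₂ a₃ a₁ u
        - 2 * qkFi C a₁ a₂ a₃ u * (qkFi C a₂ a₃ a₁ u) ^ 2 = 0) ∧
      (qkF C a₁ a₂ a₃ u *
          qkD C a₁ a₂ a₃ (fun v => qkFi C a₂ a₃ a₁ v * qkFi C a₃ a₁ a₂ v) u
        - qkD C a₁ a₂ a₃ (qkF C a₁ a₂ a₃) u * (qkFi C a₂ a₃ a₁ u * qkFi C a₃ a₁ a₂ u)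
        + 2 * (qkFi C a₁ a₂ a₃ u * qkFi C a₂ a₃ a₁ u * qkFi C a₃ a₁ a₂ u)
        - 2 * (qkFi C a₂ a₃ a₁ u) ^ 2 * qkFi C a₃ a₁ a₂ u
        - 2 * qkFi C a₂ a₃ a₁ u * (qkFi C a₃ a₁ a₂ u) ^ 2 = 0) ∧
      (qkF C a₁ a₂ a₃ u *
          qkD C a₁ a₂ a₃ (fun v => qkFi C a₃ a₁ a₂ v * qkFi C a₁ a₂ a₃ v) u
        - qkD C a₁ a₂ a₃ (qkF C a₁ a₂ a₃) u * (qkFi C a₃ a₁ a₂ u * qkFi C a₁ a₂ a₃ u)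
        + 2 * (qkFi C a₁ a₂ a₃ u * qkFi C a₂ a₃ a₁ u * qkFi C a₃ a₁ a₂ u)
        - 2 * (qkFi C a₃ a₁ a₂ u) ^ 2 * qkFi C a₁ a₂ a₃ u
        - 2 * qkFi C a₃ a₁ a₂ u * (qkFi C a₁ a₂ a₃ u) ^ 2 = 0))
    ↔ (a₁ = a₂ ∧ a₂ = a₃) := by
  constructor
  · intro H
    obtain ⟨u, hu₁, hu₂, hu₃⟩ : ∃ u, -a₁ < u ∧ -a₂ < u ∧ -a₃ < u := by
      simpa only [max_lt_iff] using exists_gt (max (-a₁) (max (-a₂) (-a₃)))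
    have h₁ : 0 < u + a₁ := by linarith
    have h₂ : 0 < u + a₂ := by linarith
    have h₃ : 0 < u + a₃ := by linarith
    obtain ⟨E₃, E₁, -⟩ := H u hu₁ hu₂ hu₃
    have k₁ := qk_ideal_eq hC h₂ h₃ h₁
    rw [qkF_rotate, qkD_rotate] at k₁
    rw [qk_ideal_eq hC h₁ h₂ h₃] at E₃
    have := qkFi_pos hC h₁ h₂ h₃
    have := qkFi_pos hC h₂ h₃ h₁
    have := qkFi_pos hC h₃ h₁ h₂
    set f₁ := qkFi C a₁ a₂ a₃ u
    set f₂ := qkFi C a₂ a₃ a₁ u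
    set f₃ := qkFi C a₃ a₁ a₂ u
    replace E₁ : 10 / 3 * f₂ * f₃ * (2 * f₁ - f₂ - f₃) = 0 := by
      rw [← k₁]; linear_combination E₁
    have e₃ := (mul_eq_zero.1 E₃).resolve_left (by positivity)
    have e₁ := (mul_eq_zero.1 E₁).resolve_left (by positivity)
    exact ⟨(eq_of_qkFi_rotate_eq hC h₁ h₂ h₃ (show f₂ = f₁ by linarith)).symm,
      (eq_of_qkFi_rotate_eq hC h₂ h₃ h₁ (show f₃ = f₂ by linarith)).symm⟩
  · rintro ⟨rfl, rfl⟩ u hu - -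
    rw [qk_ideal_eq hC (by linarith) (by linarith) (by linarith)]
    refine ⟨?_, ?_, ?_⟩ <;> ring
end
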